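/- Let n ≥ 1 and let c > 0 be real. Then det( D_n⁺ (c · M_n) D_n⁺ᵀ ) = 2^{n−1} (n+2) c^{n(n+1)/2}. -/

import Mathlib

open Matrix

/-- Column-stacking `vec` of a square matrix, indexed by pairs `(i, j)` with
`(vec T) (i, j) = T i j`. -/
def vecM {n : ℕ} (T : Matrix (Fin n) (Fin n) ℝ) : Fin n × Fin n → ℝ :=
  fun p => T p.1 p.2

/-- The commutation matrix `C_n`, satisfying `C_n (vec T) = vec Tᵀ`. -/
def commMat (n : ℕ) : Matrix (Fin n × Fin n) (Fin n × Fin n) ℝ :=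
  Matrix.of fun p q => if p.1 = q.2 ∧ p.2 = q.1 then 1 else 0

/-- The matrix `M_n = I_{n²} + C_n + (vec I_n)(vec I_n)ᵀ`. -/
def Mmat (n : ℕ) : Matrix (Fin n × Fin n) (Fin n × Fin n) ℝ :=
  1 + commMat n + Matrix.vecMulVec (vecM (1 : Matrix (Fin n) (Fin n) ℝ))
    (vecM (1 : Matrix (Fin n) (Fin n) ℝ))


/-- Index set for the half-vectorization: pairs `(i, j)` with `i ≥ j`. -/
abbrev SymIdx (n : ℕ) := {p : Fin n × Fin n // p.2 ≤ p.1}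

/-- Half-vectorization `vech`: the entries `S i j` with `i ≥ j`. -/
def vechM {n : ℕ} (S : Matrix (Fin n) (Fin n) ℝ) : SymIdx n → ℝ :=
  fun q => S q.1.1 q.1.2

/-- The duplication matrix `D_n`, satisfying `D_n (vech S) = vec S` for every
symmetric `S`. -/
def dupMat (n : ℕ) : Matrix (Fin n × Fin n) (SymIdx n) ℝ :=
  Matrix.of fun p q => if p = q.1 ∨ p = (q.1.2, q.1.1) then 1 else 0

/-- The Moore–Penrose inverse `D_n⁺ = (D_nᵀ D_n)⁻¹ D_nᵀ` of the duplication
matrix. -/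
noncomputable def dupPinv (n : ℕ) : Matrix (SymIdx n) (Fin n × Fin n) ℝ :=
  ((dupMat n)ᵀ * dupMat n)⁻¹ * (dupMat n)ᵀ

/-!
The columns of `D_n` are indicators of the sets `{(i,j), (j,i)}`, so `D_nᵀ D_n = diag w` with
`w = 1` on diagonal positions and `2` off them, `C_n D_n = D_n`, and `D_nᵀ vec I = vech I`.
Hence `D_nᵀ M_n D_n = 2 diag w + u uᵀ` with `u = vech I`, and since `w⁻¹ u = u`,
`D_n⁺ M_n D_n⁺ᵀ = 2 diag w⁻¹ + u uᵀ`. By the matrix determinant lemma its determinant is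
`2ⁿ (1 + n/2) = 2ⁿ⁻¹ (n + 2)`, the `n` diagonal positions contributing `2` each and the others `1`.
-/

open Finset

-- The matrix determinant lemma, in a form that needs no invertibility of `d`.
theorem Matrix.det_diagonal_add_vecMulVec_mul {ι R : Type*} [Fintype ι] [DecidableEq ι]
    [CommRing R] (d u v : ι → R) :
    (diagonal d + vecMulVec (d * u) v).det = (∏ i, d i) * (1 + v ⬝ᵥ u) := by
  have hfactor : diagonal d + vecMulVec (d * u) v = diagonal d * (1 + vecMulVec u v) := by
    rw [Matrix.mul_add, Matrix.mul_one, mul_vecMulVec]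
    congr 2
    ext i
    rw [mulVec_diagonal, Pi.mul_apply]
  rw [hfactor, det_mul, det_diagonal, vecMulVec_eq Unit,
    det_one_add_replicateCol_mul_replicateRow]

variable {n : ℕ}

theorem SymIdx.eq_of_val_eq_swap {q r : SymIdx n} (h : q.1 = r.1.swap) : q = r := by
  obtain ⟨⟨a, b⟩, hq⟩ := q
  obtain ⟨⟨c, d⟩, hr⟩ := r
  simp only [Prod.swap_prod_mk, Prod.mk.injEq] at h hq hr
  obtain ⟨rfl, rfl⟩ := h
  have : a = b := le_antisymm hr hq
  subst this
  rfl

theorem dupMat_apply_swap (p : Fin n × Fin n) (q : SymIdx n) :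
    dupMat n p.swap q = dupMat n p q := by
  simp only [dupMat, of_apply, Prod.ext_iff, Prod.fst_swap, Prod.snd_swap]
  congr 1
  exact propext (by tauto)

theorem dupMat_apply_val (q r : SymIdx n) : dupMat n q.1 r = if q = r then 1 else 0 := by
  simp only [dupMat, of_apply]
  congr 1
  exact propext ⟨fun h => h.elim Subtype.ext SymIdx.eq_of_val_eq_swap,
    fun h => Or.inl (congrArg Subtype.val h)⟩

/-- The number of entries of `vec S` that hold the entry `q` of `vech S`. -/
def dupWeight (n : ℕ) (q : SymIdx n) : ℝ := if q.1.1 = q.1.2 then 1 else 2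

theorem dupWeight_ne_zero (q : SymIdx n) : dupWeight n q ≠ 0 := by
  unfold dupWeight; split_ifs <;> norm_num

theorem sum_dupMat_mul {f : Fin n × Fin n → ℝ} (hf : ∀ p, f p.swap = f p) (q : SymIdx n) :
    ∑ p, dupMat n p q * f p = dupWeight n q * f q.1 := by
  simp only [dupMat, of_apply, ite_mul, one_mul, zero_mul, dupWeight]
  by_cases hq : q.1.1 = q.1.2
  · have hswap : ((q.1.2, q.1.1) : Fin n × Fin n) = q.1 := Prod.ext hq.symm hq
    rw [hswap, if_pos hq]
    simp only [or_self, sum_ite_eq', mem_univ, if_true]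
  · have hne : q.1 ≠ (q.1.2, q.1.1) := fun h => hq (congrArg Prod.fst h)
    rw [← sum_filter, if_neg hq, filter_or, filter_eq', filter_eq',
      if_pos (mem_univ _), if_pos (mem_univ _), singleton_union, sum_pair hne]
    rw [show ((q.1.2, q.1.1) : Fin n × Fin n) = q.1.swap from rfl, hf]
    ring

theorem transpose_dupMat_mul_dupMat : (dupMat n)ᵀ * dupMat n = diagonal (dupWeight n) := by
  ext q r
  rw [mul_apply]
  simp only [transpose_apply]
  rw [sum_dupMat_mul (fun p => dupMat_apply_swap p r), dupMat_apply_val, diagonal_apply]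
  split_ifs with h
  · rw [h, mul_one]
  · rw [mul_zero]

theorem dupPinv_eq : dupPinv n = diagonal (dupWeight n)⁻¹ * (dupMat n)ᵀ := by
  rw [dupPinv, transpose_dupMat_mul_dupMat]
  congr 1
  refine inv_eq_right_inv ?_
  rw [diagonal_mul_diagonal, ← diagonal_one]
  congr 1
  ext q
  exact mul_inv_cancel₀ (dupWeight_ne_zero q)

theorem commMat_mul_apply {m : Type*} (A : Matrix (Fin n × Fin n) m ℝ) (p : Fin n × Fin n)
    (j : m) : (commMat n * A) p j = A p.swap j := by
  rw [mul_apply, Fintype.sum_eq_single p.swap]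
  · simp [commMat]
  · intro p' hp'
    have hnot : ¬(p.1 = p'.2 ∧ p.2 = p'.1) := fun h => hp' (Prod.ext h.2.symm h.1.symm)
    simp only [commMat, of_apply, if_neg hnot, zero_mul]

theorem commMat_mul_dupMat : commMat n * dupMat n = dupMat n := by
  ext p q
  rw [commMat_mul_apply, dupMat_apply_swap]

theorem transpose_dupMat_mulVec_vecM {S : Matrix (Fin n) (Fin n) ℝ} (hS : S.IsSymm) :
    (dupMat n)ᵀ *ᵥ vecM S = dupWeight n * vechM S := by
  ext q
  simp only [mulVec, dotProduct, transpose_apply]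
  exact sum_dupMat_mul (f := vecM S) (fun p => hS.apply p.1 p.2) q

theorem vechM_one_apply (q : SymIdx n) : vechM (1 : Matrix (Fin n) (Fin n) ℝ) q =
    if q.1.1 = q.1.2 then 1 else 0 :=
  one_apply

theorem dupWeight_mul_vechM_one : dupWeight n * vechM 1 = vechM 1 := by
  ext q
  rw [Pi.mul_apply, vechM_one_apply, dupWeight]
  split_ifs <;> simp

theorem transpose_dupMat_mul_Mmat_mul_dupMat :
    (dupMat n)ᵀ * Mmat n * dupMat n =
      diagonal (2 * dupWeight n) + vecMulVec (vechM 1) (vechM 1) := by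
  have hv : (dupMat n)ᵀ *ᵥ vecM 1 = vechM 1 := by
    rw [transpose_dupMat_mulVec_vecM isSymm_one, dupWeight_mul_vechM_one]
  rw [Mmat, Matrix.mul_add, Matrix.mul_add, Matrix.add_mul, Matrix.add_mul, Matrix.mul_one,
    Matrix.mul_assoc _ (commMat n), commMat_mul_dupMat, transpose_dupMat_mul_dupMat,
    mul_vecMulVec, vecMulVec_mul, ← mulVec_transpose, hv, diagonal_add, two_mul]
  rfl

theorem dupPinv_mul_Mmat_mul_transpose_dupPinv :
    dupPinv n * Mmat n * (dupPinv n)ᵀ =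
      diagonal (2 * (dupWeight n)⁻¹) + vecMulVec (vechM 1) (vechM 1) := by
  have hu : diagonal (dupWeight n)⁻¹ *ᵥ vechM 1 = vechM 1 := by
    ext q
    rw [mulVec_diagonal, Pi.inv_apply, vechM_one_apply, dupWeight]
    split_ifs <;> simp
  rw [dupPinv_eq, transpose_mul, transpose_transpose, diagonal_transpose, ← Matrix.mul_assoc,
    Matrix.mul_assoc (diagonal _) (dupMat n)ᵀ, Matrix.mul_assoc (diagonal _) (_ * _),
    transpose_dupMat_mul_Mmat_mul_dupMat, Matrix.mul_add, Matrix.add_mul, diagonal_mul_diagonal,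
    diagonal_mul_diagonal, mul_vecMulVec, vecMulVec_mul, hu, ← mulVec_transpose,
    diagonal_transpose, hu]
  congr 2
  ext q
  have := dupWeight_ne_zero q
  simp only [Pi.mul_apply, Pi.inv_apply, Pi.ofNat_apply]
  field_simp

theorem card_symIdx (n : ℕ) : Fintype.card (SymIdx n) = n * (n + 1) / 2 := by
  have e : SymIdx n ≃ Sym2 (Fin n) :=
    ((Equiv.prodComm _ _).subtypeEquiv fun _ => Iff.rfl).trans Sym2.sortEquiv.symm
  rw [Fintype.card_congr e, Sym2.card, Fintype.card_fin, Nat.choose_two_right, Nat.add_sub_cancel,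
    mul_comm]

theorem card_filter_symIdx_diag (n : ℕ) : #{q : SymIdx n | q.1.1 = q.1.2} = n := by
  refine (card_nbij' (fun q => q.1.1) (fun i => ⟨(i, i), le_rfl⟩) ?_ ?_ ?_ ?_).trans
    (card_fin n)
  · simp
  · simp
  · rintro ⟨⟨i, j⟩, hij⟩ hq
    simp only [coe_filter, mem_univ, true_and, Set.mem_ofPred_eq] at hq
    subst hq
    rfl
  · exact fun i _ => rfl

theorem prod_two_mul_inv_dupWeight : ∏ q, 2 * (dupWeight n q)⁻¹ = 2 ^ n := by
  have h : ∀ q, 2 * (dupWeight n q)⁻¹ = if q.1.1 = q.1.2 then 2 else 1 := by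
    intro q
    unfold dupWeight
    split_ifs <;> norm_num
  simp only [h, prod_ite, prod_const, card_filter_symIdx_diag, one_pow, mul_one]

theorem vechM_one_dotProduct_self : vechM 1 ⬝ᵥ vechM (1 : Matrix (Fin n) (Fin n) ℝ) = n := by
  have h (q : SymIdx n) : vechM (1 : Matrix (Fin n) (Fin n) ℝ) q * vechM 1 q =
      if q.1.1 = q.1.2 then 1 else 0 := by
    rw [vechM_one_apply]
    split_ifs <;> norm_num
  simp only [dotProduct, h, sum_boole, card_filter_symIdx_diag]

theorem det_diagonal_two_mul_inv_dupWeight_add_vecMulVec :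
    (diagonal (2 * (dupWeight n)⁻¹) + vecMulVec (vechM 1) (vechM 1)).det =
      (2 : ℝ) ^ n * (1 + (n : ℝ) / 2) := by
  have hu : 2 * (dupWeight n)⁻¹ * ((2 : ℝ)⁻¹ • vechM 1) = vechM 1 := by
    ext q
    simp only [Pi.mul_apply, Pi.inv_apply, Pi.ofNat_apply, Pi.smul_apply, smul_eq_mul,
      vechM_one_apply, dupWeight]
    split_ifs <;> norm_num
  have hdet := det_diagonal_add_vecMulVec_mul (2 * (dupWeight n)⁻¹) ((2 : ℝ)⁻¹ • vechM 1) (vechM 1)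
  rw [hu] at hdet
  simp only [hdet, Pi.mul_apply, Pi.inv_apply, Pi.ofNat_apply, prod_two_mul_inv_dupWeight,
    dotProduct_smul, vechM_one_dotProduct_self, smul_eq_mul]
  ring

theorem det_Sigma_general (n : ℕ) (hn : 1 ≤ n) (c : ℝ) :
    (dupPinv n * (c • Mmat n) * (dupPinv n)ᵀ).det =
      2 ^ (n - 1) * ((n : ℝ) + 2) * c ^ (n * (n + 1) / 2) := by
  obtain ⟨m, rfl⟩ := Nat.exists_eq_add_of_le' hn
  rw [Matrix.mul_smul, Matrix.smul_mul, det_smul, dupPinv_mul_Mmat_mul_transpose_dupPinv,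
    det_diagonal_two_mul_inv_dupWeight_add_vecMulVec, card_symIdx, Nat.add_sub_cancel, pow_succ]
  push_cast
  ring

/-- `det(D_n⁺ (c M_n) D_n⁺ᵀ) = 2^{n−1} (n+2) c^{n(n+1)/2}`. -/
theorem det_Sigma (n : ℕ) (hn : 1 ≤ n) (c : ℝ) (hc : 0 < c) :
    (dupPinv n * (c • Mmat n) * (dupPinv n)ᵀ).det =
      2 ^ (n - 1) * ((n : ℝ) + 2) * c ^ (n * (n + 1) / 2) :=
  det_Sigma_general n hn c
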